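/- For any set of positions P of R and any character α, δ(P,α) equals the union over all v ∈ Ñ⊙(P,α) of δ⊙(v,α) together with the union over all u ∈ Ñ∗(P,α) of δ∗(u,α), where Ñ⊙(P,α) and Ñ∗(P,α) are the relevant ⊙- and ∗-transition nodes. -/

import Mathlib

/-!
A position `q` follows `p` in `R` exactly when either some `⊙`-node `v` has `p ∈ last(left v)`
and `q ∈ first(right v)`, or some `∗`-node `u` above `lca(p,q)` has `p ∈ last(u)` and
`q ∈ first(u)`: splitting a position sequence at the adjacent pair `p q` and descending through
the parse tree gives one direction, concatenating position sequences the other. Membership in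
`first`/`last` persists along the path from a node down to the position, so the `∗`-node can be
taken to be `parent*(lca(p,q))`, which puts it in `N∗(P,α)`; the `⊙`-node lies in `N⊙(P,α)`
outright. Domination only enlarges the sets `δ⊙`, `δ∗` and strictly shortens paths, so every
transition node is dominated by a relevant one whose internal transitions contain its own.
-/

/-- Non-empty regular expressions over alphabet `α`, identified with their parse trees. -/
inductive RE (α : Type) : Type where
  | eps : RE α
  | ch : α → RE α
  | cat : RE α → RE α → RE α
  | alt : RE α → RE α → RE α
  | star : RE α → RE α

/-- Child directions in the parse tree (a `star`-node only has an `L` child). -/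
inductive Dir : Type where
  | L : Dir
  | R : Dir
  deriving DecidableEq

/-- A node of the parse tree is identified with the path from the root to it. -/
abbrev TreePath : Type := List Dir

namespace RE

variable {α : Type}

/-- The subexpression of `R` rooted at the node reached by following path `v`
(`none` if no such node exists). -/
def sub : RE α → TreePath → Option (RE α)
  | r, [] => some r
  | .cat r _, .L :: p => sub r p
  | .cat _ s, .R :: p => sub s p
  | .alt r _, .L :: p => sub r p
  | .alt _ s, .R :: p => sub s p
  | .star r, .L :: p => sub r p
  | _, _ => none

/-- `v` is a node of the parse tree of `R`. -/
def IsNode (R : RE α) (v : TreePath) : Prop := ∃ r, R.sub v = some r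

/-- The label of a position (character leaf); `none` if `p` is not a position. -/
def labelOf (R : RE α) (p : TreePath) : Option α :=
  match R.sub p with
  | some (.ch a) => some a
  | _ => none

/-- `p` is a position of `R`, i.e. a leaf labeled by a character. -/
def IsPos (R : RE α) (p : TreePath) : Prop := ∃ a, R.labelOf p = some a

/-- `v` is a `⊙`-node (concatenation node). -/
def IsCatNode (R : RE α) (v : TreePath) : Prop := ∃ r s, R.sub v = some (.cat r s)

/-- `v` is a `∗`-node (Kleene-star node). -/
def IsStarNode (R : RE α) (v : TreePath) : Prop := ∃ r, R.sub v = some (.star r)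

/-- `PosSeq r w` holds when `w` is a sequence of (paths to) positions of `r`
whose labels spell some string of `L(r)`. -/
inductive PosSeq : RE α → List TreePath → Prop where
  | eps : PosSeq .eps []
  | ch (a : α) : PosSeq (.ch a) [[]]
  | cat {r s : RE α} {u v : List TreePath} : PosSeq r u → PosSeq s v →
      PosSeq (.cat r s) (u.map (Dir.L :: ·) ++ v.map (Dir.R :: ·))
  | altL {r s : RE α} {u : List TreePath} : PosSeq r u → PosSeq (.alt r s) (u.map (Dir.L :: ·))
  | altR {r s : RE α} {v : List TreePath} : PosSeq s v → PosSeq (.alt r s) (v.map (Dir.R :: ·))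
  | starNil {r : RE α} : PosSeq (.star r) []
  | starCons {r : RE α} {u w : List TreePath} : PosSeq r u → PosSeq (.star r) w →
      PosSeq (.star r) (u.map (Dir.L :: ·) ++ w)

/-- `first(v)`: the positions (as paths in `R`) that occur first in a position
sequence of the subexpression rooted at `v`. -/
def firstSet (R : RE α) (v : TreePath) : Set TreePath :=
  {p | ∃ r, R.sub v = some r ∧ ∃ p' w, PosSeq r (p' :: w) ∧ p = v ++ p'}

/-- `last(v)`: the positions (as paths in `R`) that occur last in a position
sequence of the subexpression rooted at `v`. -/
def lastSet (R : RE α) (v : TreePath) : Set TreePath :=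
  {p | ∃ r, R.sub v = some r ∧ ∃ w p', PosSeq r (w ++ [p']) ∧ p = v ++ p'}

/-- `follow(R,p)`: the positions that can follow `p` in a position sequence of `R`. -/
def followSet (R : RE α) (p : TreePath) : Set TreePath :=
  {q | ∃ w₁ w₂, PosSeq R (w₁ ++ p :: q :: w₂)}

/-- `firstextent(p) = {v : p ∈ first(v)}`. -/
def firstExtent (R : RE α) (p : TreePath) : Set TreePath := {v | p ∈ R.firstSet v}

/-- `lastextent(p) = {v : p ∈ last(v)}`. -/
def lastExtent (R : RE α) (p : TreePath) : Set TreePath := {v | p ∈ R.lastSet v}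

/-- `firstextent(P)` for a set of positions `P`. -/
def firstExtentSet (R : RE α) (P : Set TreePath) : Set TreePath := ⋃ p ∈ P, R.firstExtent p

/-- `lastextent(P)` for a set of positions `P`. -/
def lastExtentSet (R : RE α) (P : Set TreePath) : Set TreePath := ⋃ p ∈ P, R.lastExtent p

end RE

/-- Lowest common ancestor of two nodes = longest common prefix of the paths. -/
def lcaP : TreePath → TreePath → TreePath
  | a :: p, b :: q => if a = b then a :: lcaP p q else []
  | _, _ => []

namespace RE

variable {α : Type}

/-- `u = parent*(v)`: `u` is the lowest ancestor of `v` (possibly `v` itself)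
that is a `∗`-node. -/
def IsLowestStarAnc (R : RE α) (v u : TreePath) : Prop :=
  u <+: v ∧ R.IsStarNode u ∧ ∀ w, w <+: v → R.IsStarNode w → w <+: u

/-- `δ(p,α)`: the `α`-transitions of the position automaton out of position `p`. -/
def delta (R : RE α) (p : TreePath) (a : α) : Set TreePath :=
  {q | R.labelOf q = some a ∧ q ∈ R.followSet p}

/-- `δ(P,α) = ∪_{p ∈ P} δ(p,α)`. -/
def deltaSet (R : RE α) (P : Set TreePath) (a : α) : Set TreePath := ⋃ p ∈ P, R.delta p a

/-- Internal `⊙`-transition: `δ⊙(v,α) = {q ∈ Pos_α : right(v) ∈ firstextent(q)}`. -/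
def deltaOdot (R : RE α) (v : TreePath) (a : α) : Set TreePath :=
  {q | R.labelOf q = some a ∧ q ∈ R.firstSet (v ++ [Dir.R])}

/-- Internal `∗`-transition: `δ∗(v,α) = {q ∈ Pos_α : parent*(v) ∈ firstextent(q)}`. -/
def deltaStar (R : RE α) (v : TreePath) (a : α) : Set TreePath :=
  {q | R.labelOf q = some a ∧ ∃ u, R.IsLowestStarAnc v u ∧ q ∈ R.firstSet u}

/-- `N⊙(P,α)`: the `⊙`-transition nodes. -/
def NOdot (R : RE α) (P : Set TreePath) (a : α) : Set TreePath :=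
  {v | R.IsCatNode v ∧ (v ++ [Dir.L]) ∈ R.lastExtentSet P ∧
    (∃ q, R.labelOf q = some a ∧ q ∈ R.firstSet (v ++ [Dir.R]))}

/-- `N∗(P,α)`: the `∗`-transition nodes. -/
def NStar (R : RE α) (P : Set TreePath) (a : α) : Set TreePath :=
  {u | R.IsStarNode u ∧
    (∃ p ∈ P, ∃ q, R.labelOf q = some a ∧ R.IsLowestStarAnc (lcaP p q) u) ∧
    (∃ p ∈ P, p ∈ R.lastSet u) ∧ (∃ q, R.labelOf q = some a ∧ q ∈ R.firstSet u)}

/-- `u` `∗`-dominates `v`: `u` is a proper ancestor of `v` and `first(v) ⊆ first(u)`. -/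
def StarDom (R : RE α) (u v : TreePath) : Prop :=
  u <+: v ∧ u ≠ v ∧ R.firstSet v ⊆ R.firstSet u

/-- `u` `⊙`-dominates `v`: `u` is a proper ancestor of `v` and
`first(right(v)) ⊆ first(right(u))`. -/
def OdotDom (R : RE α) (u v : TreePath) : Prop :=
  u <+: v ∧ u ≠ v ∧ R.firstSet (v ++ [Dir.R]) ⊆ R.firstSet (u ++ [Dir.R])

/-- `Ñ⊙(P,α)`: the relevant `⊙`-transition nodes. -/
def RelNOdot (R : RE α) (P : Set TreePath) (a : α) : Set TreePath :=
  {v ∈ R.NOdot P a | ∀ u ∈ R.NOdot P a, ¬ R.OdotDom u v}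

/-- `Ñ∗(P,α)`: the relevant `∗`-transition nodes. -/
def RelNStar (R : RE α) (P : Set TreePath) (a : α) : Set TreePath :=
  {v ∈ R.NStar P a | ∀ u ∈ R.NStar P a, ¬ R.StarDom u v}

/-- `v` is a node of the transition tree `T` of `P`: an ancestor of some position of `P`. -/
def InT (R : RE α) (P : Set TreePath) (v : TreePath) : Prop := ∃ p ∈ P, v <+: p

/-- `v` is a branching node of the transition tree of `P`: both children are in `T`. -/
def Branching (R : RE α) (P : Set TreePath) (v : TreePath) : Prop :=
  R.InT P (v ++ [Dir.L]) ∧ R.InT P (v ++ [Dir.R])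

/-- `v` is a leaf of the transition tree of `P`. -/
def LeafT (R : RE α) (P : Set TreePath) (v : TreePath) : Prop :=
  R.InT P v ∧ ∀ d : Dir, ¬ R.InT P (v ++ [d])

/-- `v` is a `⊙`-live node: a `⊙`-node with `left(v) ∈ lastextent(P)`. -/
def OdotLive (R : RE α) (P : Set TreePath) (v : TreePath) : Prop :=
  R.IsCatNode v ∧ (v ++ [Dir.L]) ∈ R.lastExtentSet P

/-- `v` is weakly `⊙`-dominated by `u`: `u` is `⊙`-live, a proper ancestor of `v`,
and `first(v) ⊆ first(right(u))`. -/
def WeakOdotDom (R : RE α) (P : Set TreePath) (u v : TreePath) : Prop :=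
  R.OdotLive P u ∧ u <+: v ∧ u ≠ v ∧ R.firstSet v ⊆ R.firstSet (u ++ [Dir.R])

/-- The pair `(t, b)` delimits a segment of the transition tree of `P`: a path from a
leaf or branching node `b` up to the nearest branching node `t` strictly above it
(or to the root if there is none). -/
def IsSegment (R : RE α) (P : Set TreePath) (t b : TreePath) : Prop :=
  R.InT P b ∧ t <+: b ∧ t ≠ b ∧
  (R.LeafT P b ∨ R.Branching P b) ∧
  (R.Branching P t ∨ t = []) ∧
  (∀ w, t <+: w → w <+: b → w ≠ t → w ≠ b → ¬ R.Branching P w)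

/-- The language `L(R)`. -/
def lang : RE α → Set (List α)
  | .eps => {[]}
  | .ch a => {[a]}
  | .cat r s => {w | ∃ u ∈ lang r, ∃ v ∈ lang s, w = u ++ v}
  | .alt r s => lang r ∪ lang s
  | .star r => {w | ∃ l : List (List α), (∀ u ∈ l, u ∈ lang r) ∧ w = l.flatten}

/-- The position automaton (Glushkov automaton) of `R`: states are the positions of `R`
plus a start state `none`; for `q ∈ first(R)` there is a transition `(p₀, q, label(q))`,
and for `q ∈ follow(R,p)` a transition `(p, q, label(q))`; accepting states are
`last(R)`, together with `p₀` if `ε ∈ L(R)`. -/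
def posNFA (R : RE α) : NFA α (Option TreePath) where
  step := fun s a =>
    {t | ∃ q : TreePath, t = some q ∧ R.labelOf q = some a ∧
      ((s = none ∧ q ∈ R.firstSet []) ∨ (∃ p, s = some p ∧ q ∈ R.followSet p))}
  start := {none}
  accept := {t | (∃ p, t = some p ∧ p ∈ R.lastSet []) ∨ (t = none ∧ [] ∈ R.lang)}

end RE

namespace List

variable {γ β : Type*}

theorem append_eq_append_cons_iff {A B w₁ w₂ : List γ} {x : γ} :
    A ++ B = w₁ ++ x :: w₂ ↔
      (∃ a, A = w₁ ++ x :: a ∧ w₂ = a ++ B) ∨ (∃ b, B = b ++ x :: w₂ ∧ w₁ = A ++ b) := by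
  constructor
  · intro h
    rcases append_eq_append_iff.mp h with ⟨b, rfl, rfl⟩ | ⟨c, rfl, hc⟩
    · exact .inr ⟨b, rfl, rfl⟩
    · rcases cons_eq_append_iff.mp hc with ⟨rfl, rfl⟩ | ⟨a, rfl, rfl⟩
      · exact .inr ⟨[], rfl, by simp⟩
      · exact .inl ⟨a, rfl, rfl⟩
  · rintro (⟨a, rfl, rfl⟩ | ⟨b, rfl, rfl⟩) <;> simp

theorem map_eq_append_cons_iff {f : γ → β} {l : List γ} {w₁ w₂ : List β} {x : β} :
    l.map f = w₁ ++ x :: w₂ ↔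
      ∃ l₁ y l₂, l = l₁ ++ y :: l₂ ∧ l₁.map f = w₁ ∧ f y = x ∧ l₂.map f = w₂ := by
  constructor
  · intro h
    obtain ⟨l₁, l', rfl, rfl, h'⟩ := map_eq_append_iff.mp h
    obtain ⟨y, l₂, rfl, rfl, rfl⟩ := map_eq_cons_iff.mp h'
    exact ⟨l₁, y, l₂, rfl, rfl, rfl, rfl⟩
  · rintro ⟨l₁, y, l₂, rfl, rfl, rfl, rfl⟩
    simp

theorem append_eq_append_cons_cons {A B w₁ w₂ : List γ} {x y : γ}
    (h : A ++ B = w₁ ++ x :: y :: w₂) :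
    (∃ a₁ a₂, A = a₁ ++ x :: y :: a₂) ∨ (∃ b₁ b₂, B = b₁ ++ x :: y :: b₂) ∨
      (∃ a, A = a ++ [x]) ∧ (∃ b, B = y :: b) := by
  rcases append_eq_append_cons_iff.mp h with ⟨a, rfl, ha⟩ | ⟨b, rfl, -⟩
  · rcases cons_eq_append_iff.mp ha with ⟨rfl, rfl⟩ | ⟨a', rfl, -⟩
    · exact .inr (.inr ⟨⟨w₁, by simp⟩, ⟨w₂, rfl⟩⟩)
    · exact .inl ⟨w₁, a', rfl⟩
  · exact .inr (.inl ⟨b, w₂, rfl⟩)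

theorem map_eq_append_cons_cons {f : γ → β} {l : List γ}
    {w₁ w₂ : List β} {x y : β} (h : l.map f = w₁ ++ x :: y :: w₂) :
    ∃ l₁ x₀ y₀ l₂, l = l₁ ++ x₀ :: y₀ :: l₂ ∧ f x₀ = x ∧ f y₀ = y := by
  obtain ⟨l₁, x₀, l', rfl, -, hx, h'⟩ := map_eq_append_cons_iff.mp h
  obtain ⟨y₀, l₂, rfl, hy, -⟩ := map_eq_cons_iff.mp h'
  exact ⟨l₁, x₀, y₀, l₂, rfl, hx, hy⟩

theorem wellFounded_strictPrefix : WellFounded fun u v : List γ => u <+: v ∧ u ≠ v :=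
  Subrelation.wf (fun {_ _} h => h.1.length_le.lt_of_ne fun hl => h.2 (h.1.eq_of_length hl))
    (measure length).wf

end List

theorem lcaP_prefix_left (p q : TreePath) : lcaP p q <+: p := by
  induction p, q using lcaP.induct <;> simp_all [lcaP]

theorem lcaP_prefix_right (p q : TreePath) : lcaP p q <+: q := by
  induction p, q using lcaP.induct <;> simp_all [lcaP]

theorem WellFounded.exists_undominated {ι β : Type*} {Dom : ι → ι → Prop}
    (hwf : WellFounded Dom) {N : Set ι} (f : ι → Set β) (hf : ∀ u v, Dom u v → f v ⊆ f u)
    {v : ι} (hv : v ∈ N) : ∃ u ∈ {u ∈ N | ∀ w ∈ N, ¬ Dom w u}, f v ⊆ f u := by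
  obtain ⟨u, ⟨huN, hvu⟩, hmin⟩ := hwf.has_min {u | u ∈ N ∧ f v ⊆ f u} ⟨v, hv, subset_rfl⟩
  exact ⟨u, ⟨huN, fun w hwN hwu => hmin w ⟨hwN, hvu.trans (hf w u hwu)⟩ hwu⟩, hvu⟩

namespace RE

variable {α : Type}

open List

theorem sub_append (R : RE α) (v w : TreePath) : R.sub (v ++ w) = (R.sub v).bind (·.sub w) := by
  induction v generalizing R with
  | nil => simp [sub]
  | cons d v ih => cases R <;> cases d <;> simp [sub, ih]

theorem sub_append_of_sub_eq {R r : RE α} {v : TreePath} (h : R.sub v = some r) (w : TreePath) :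
    R.sub (v ++ w) = r.sub w := by
  rw [sub_append, h, Option.bind_some]

theorem exists_posSeq (r : RE α) : ∃ w, PosSeq r w := by
  induction r with
  | eps => exact ⟨_, .eps⟩
  | ch a => exact ⟨_, .ch a⟩
  | cat r s ihr ihs => obtain ⟨u, hu⟩ := ihr; obtain ⟨v, hv⟩ := ihs; exact ⟨_, .cat hu hv⟩
  | alt r s ihr _ => obtain ⟨u, hu⟩ := ihr; exact ⟨_, .altL hu⟩
  | star r _ => exact ⟨_, .starNil⟩

theorem PosSeq.star_append {r : RE α} {w₁ w₂ : List TreePath}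
    (h₁ : PosSeq (.star r) w₁) (h₂ : PosSeq (.star r) w₂) : PosSeq (.star r) (w₁ ++ w₂) := by
  generalize hs : RE.star r = s at h₁ h₂
  induction h₁ with
  | starNil => exact h₂
  | starCons hu _ _ ih => rw [append_assoc]; exact .starCons hu (ih hs h₂)
  | _ => cases hs

theorem PosSeq.exists_block_of_map {c : RE α} {u : List TreePath} (hu : PosSeq c u)
    {e d : Dir} {x : TreePath} {w₁ w₂ : List TreePath}
    (h : u.map (e :: ·) = w₁ ++ (d :: x) :: w₂) :
    e = d ∧ ∃ u₁ u₂, PosSeq c (u₁ ++ x :: u₂) ∧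
      w₁ = u₁.map (d :: ·) ∧ w₂ = u₂.map (d :: ·) := by
  obtain ⟨u₁, y, u₂, rfl, rfl, hy, rfl⟩ := map_eq_append_cons_iff.mp h
  obtain ⟨rfl, rfl⟩ := List.cons.inj hy
  exact ⟨rfl, u₁, u₂, hu, rfl, rfl⟩

theorem PosSeq.exists_child_block {r : RE α} {W : List TreePath} (h : PosSeq r W)
    {w₁ w₂ : List TreePath} {d : Dir} {x : TreePath} (hW : W = w₁ ++ (d :: x) :: w₂) :
    ∃ c, r.sub [d] = some c ∧ ∃ u₁ u₂ v₁ v₂, PosSeq c (u₁ ++ x :: u₂) ∧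
      w₁ = v₁ ++ u₁.map (d :: ·) ∧ w₂ = u₂.map (d :: ·) ++ v₂ := by
  induction h generalizing w₁ w₂ with
  | eps => simp at hW
  | ch a => rcases w₁ with _ | ⟨_, _ | _⟩ <;> simp at hW
  | @cat r s u v hu hv =>
    rcases append_eq_append_cons_iff.mp hW with ⟨a, hA, rfl⟩ | ⟨b, hB, rfl⟩
    · obtain ⟨rfl, u₁, u₂, hseq, rfl, rfl⟩ := hu.exists_block_of_map hA
      exact ⟨r, by simp [sub], u₁, u₂, [], v.map (Dir.R :: ·), hseq, rfl, rfl⟩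
    · obtain ⟨rfl, u₁, u₂, hseq, rfl, rfl⟩ := hv.exists_block_of_map hB
      exact ⟨s, by simp [sub], u₁, u₂, u.map (Dir.L :: ·), [], hseq, rfl, by simp⟩
  | @altL r s u hu =>
    obtain ⟨rfl, u₁, u₂, hseq, rfl, rfl⟩ := hu.exists_block_of_map hW
    exact ⟨r, by simp [sub], u₁, u₂, [], [], hseq, rfl, by simp⟩
  | @altR r s v hv =>
    obtain ⟨rfl, u₁, u₂, hseq, rfl, rfl⟩ := hv.exists_block_of_map hW
    exact ⟨s, by simp [sub], u₁, u₂, [], [], hseq, rfl, by simp⟩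
  | starNil => simp at hW
  | @starCons r u w hu _ _ ih =>
    rcases append_eq_append_cons_iff.mp hW with ⟨a, hA, rfl⟩ | ⟨b, hB, rfl⟩
    · obtain ⟨rfl, u₁, u₂, hseq, rfl, rfl⟩ := hu.exists_block_of_map hA
      exact ⟨r, by simp [sub], u₁, u₂, [], w, hseq, rfl, rfl⟩
    · obtain ⟨c, hc, u₁, u₂, v₁, v₂, hseq, rfl, rfl⟩ := ih hB
      exact ⟨c, hc, u₁, u₂, u.map (Dir.L :: ·) ++ v₁, v₂, hseq, by simp, rfl⟩

theorem mem_firstSet_child {R : RE α} {v p : TreePath} {d : Dir} (hp : p ∈ R.firstSet v)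
    (hvp : v ++ [d] <+: p) : p ∈ R.firstSet (v ++ [d]) := by
  obtain ⟨r, hr, p', w, hseq, rfl⟩ := hp
  obtain ⟨x, rfl⟩ : [d] <+: p' := (prefix_append_right_inj v).mp hvp
  obtain ⟨c, hc, u₁, u₂, v₁, v₂, hseq', h₁, -⟩ := hseq.exists_child_block (w₁ := []) rfl
  obtain ⟨-, rfl⟩ : v₁ = [] ∧ u₁ = [] := by simpa using h₁.symm
  exact ⟨c, by rw [sub_append_of_sub_eq hr, hc], x, u₂, hseq', by simp⟩

theorem mem_lastSet_child {R : RE α} {v p : TreePath} {d : Dir} (hp : p ∈ R.lastSet v)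
    (hvp : v ++ [d] <+: p) : p ∈ R.lastSet (v ++ [d]) := by
  obtain ⟨r, hr, w, p', hseq, rfl⟩ := hp
  obtain ⟨x, rfl⟩ : [d] <+: p' := (prefix_append_right_inj v).mp hvp
  obtain ⟨c, hc, u₁, u₂, v₁, v₂, hseq', -, h₂⟩ := hseq.exists_child_block (w₂ := []) rfl
  obtain ⟨rfl, -⟩ : u₂ = [] ∧ v₂ = [] := by simpa using h₂.symm
  exact ⟨c, by rw [sub_append_of_sub_eq hr, hc], u₁, x, hseq', by simp⟩

theorem mem_firstSet_of_prefix {R : RE α} {v u p : TreePath} (hp : p ∈ R.firstSet v)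
    (hvu : v <+: u) (hup : u <+: p) : p ∈ R.firstSet u := by
  induction u using List.reverseRecOn with
  | nil => rwa [prefix_nil.mp hvu] at hp
  | append_singleton u d ih =>
    rcases prefix_concat_iff.mp hvu with rfl | hvu
    · exact hp
    · exact mem_firstSet_child (ih hvu ((prefix_append _ _).trans hup)) hup

theorem mem_lastSet_of_prefix {R : RE α} {v u p : TreePath} (hp : p ∈ R.lastSet v)
    (hvu : v <+: u) (hup : u <+: p) : p ∈ R.lastSet u := by
  induction u using List.reverseRecOn with
  | nil => rwa [prefix_nil.mp hvu] at hp
  | append_singleton u d ih =>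
    rcases prefix_concat_iff.mp hvu with rfl | hvu
    · exact hp
    · exact mem_lastSet_child (ih hvu ((prefix_append _ _).trans hup)) hup

theorem exists_isLowestStarAnc {R : RE α} {m s : TreePath} (hsm : s <+: m)
    (hs : R.IsStarNode s) : ∃ u, R.IsLowestStarAnc m u := by
  obtain ⟨u, ⟨hum, hu⟩, hmin⟩ := (measure fun w : TreePath => m.length - w.length).wf.has_min
    {w | w <+: m ∧ R.IsStarNode w} ⟨s, hsm, hs⟩
  refine ⟨u, hum, hu, fun w hwm hw => ?_⟩
  rcases prefix_or_prefix_of_prefix hwm hum with hwu | huw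
  · exact hwu
  · have hwu : w.length ≤ u.length := by
      have : ¬ m.length - w.length < m.length - u.length := hmin w ⟨hwm, hw⟩
      have := hwm.length_le
      omega
    obtain rfl := huw.eq_of_length (le_antisymm huw.length_le hwu)
    exact prefix_rfl

theorem IsLowestStarAnc.eq_self {R : RE α} {u v : TreePath} (hu : R.IsStarNode u)
    (h : R.IsLowestStarAnc u v) : v = u :=
  h.1.eq_of_length (le_antisymm h.1.length_le (h.2.2 u prefix_rfl hu).length_le)

theorem mem_deltaStar_of_isStarNode {R : RE α} {u q : TreePath} {a : α} (hu : R.IsStarNode u) :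
    q ∈ R.deltaStar u a ↔ R.labelOf q = some a ∧ q ∈ R.firstSet u := by
  constructor
  · rintro ⟨hqa, v, hv, hq⟩
    exact ⟨hqa, hv.eq_self hu ▸ hq⟩
  · rintro ⟨hqa, hq⟩
    exact ⟨hqa, u, ⟨prefix_rfl, hu, fun _ hw _ => hw⟩, hq⟩

def HasTransitionNode (R : RE α) (p q : TreePath) : Prop :=
  (∃ v, R.IsCatNode v ∧ p ∈ R.lastSet (v ++ [Dir.L]) ∧ q ∈ R.firstSet (v ++ [Dir.R])) ∨
    ∃ u, R.IsStarNode u ∧ u <+: lcaP p q ∧ p ∈ R.lastSet u ∧ q ∈ R.firstSet u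

theorem mem_firstSet_append {R r : RE α} {c v p : TreePath} (hc : R.sub c = some r)
    (h : p ∈ r.firstSet v) : c ++ p ∈ R.firstSet (c ++ v) := by
  obtain ⟨r', hr', p', w, hseq, rfl⟩ := h
  exact ⟨r', by rw [sub_append_of_sub_eq hc, hr'], p', w, hseq, (append_assoc _ _ _).symm⟩

theorem mem_lastSet_append {R r : RE α} {c v p : TreePath} (hc : R.sub c = some r)
    (h : p ∈ r.lastSet v) : c ++ p ∈ R.lastSet (c ++ v) := by
  obtain ⟨r', hr', w, p', hseq, rfl⟩ := h
  exact ⟨r', by rw [sub_append_of_sub_eq hc, hr'], w, p', hseq, (append_assoc _ _ _).symm⟩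

theorem HasTransitionNode.cons {R r : RE α} {d : Dir} (hd : R.sub [d] = some r)
    {p q : TreePath} (h : r.HasTransitionNode p q) : R.HasTransitionNode (d :: p) (d :: q) := by
  rcases h with ⟨v, ⟨r₁, s₁, hv⟩, hp, hq⟩ | ⟨u, ⟨r₁, hu⟩, hpre, hp, hq⟩
  · refine .inl ⟨d :: v, ⟨r₁, s₁, ?_⟩, mem_lastSet_append hd hp, mem_firstSet_append hd hq⟩
    rw [← singleton_append, sub_append_of_sub_eq hd, hv]
  · refine .inr ⟨d :: u, ⟨r₁, ?_⟩, ?_, mem_lastSet_append hd hp, mem_firstSet_append hd hq⟩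
    · rw [← singleton_append, sub_append_of_sub_eq hd, hu]
    · simpa [lcaP] using hpre

theorem PosSeq.hasTransitionNode {r : RE α} {W : List TreePath} (h : PosSeq r W)
    {w₁ w₂ : List TreePath} {p q : TreePath} (hW : W = w₁ ++ p :: q :: w₂) :
    r.HasTransitionNode p q := by
  induction h generalizing w₁ w₂ p q with
  | eps => simp at hW
  | ch a => rcases w₁ with _ | ⟨_, _ | _⟩ <;> simp at hW
  | @cat r s u v hu hv ihu ihv =>
    rcases append_eq_append_cons_cons hW with ⟨a₁, a₂, hA⟩ | ⟨b₁, b₂, hB⟩ | ⟨⟨a, hA⟩, ⟨b, hB⟩⟩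
    · obtain ⟨u₁, p₀, q₀, u₂, rfl, rfl, rfl⟩ := map_eq_append_cons_cons hA
      exact (ihu rfl).cons (by simp [sub])
    · obtain ⟨v₁, p₀, q₀, v₂, rfl, rfl, rfl⟩ := map_eq_append_cons_cons hB
      exact (ihv rfl).cons (by simp [sub])
    · obtain ⟨u₁, p₀, u₂, rfl, -, rfl, hu₂⟩ := map_eq_append_cons_iff.mp hA
      obtain rfl : u₂ = [] := by simpa using hu₂
      obtain ⟨q₀, v₂, rfl, rfl, -⟩ := map_eq_cons_iff.mp hB
      exact .inl ⟨[], ⟨r, s, rfl⟩, ⟨r, by simp [sub], u₁, p₀, hu, rfl⟩,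
        ⟨s, by simp [sub], q₀, v₂, hv, rfl⟩⟩
  | altL _ ih =>
    obtain ⟨u₁, p₀, q₀, u₂, rfl, rfl, rfl⟩ := map_eq_append_cons_cons hW
    exact (ih rfl).cons (by simp [sub])
  | altR _ ih =>
    obtain ⟨u₁, p₀, q₀, u₂, rfl, rfl, rfl⟩ := map_eq_append_cons_cons hW
    exact (ih rfl).cons (by simp [sub])
  | starNil => simp at hW
  | @starCons r u w hu hw ihu ihw =>
    rcases append_eq_append_cons_cons hW with ⟨a₁, a₂, hA⟩ | ⟨b₁, b₂, hB⟩ | ⟨⟨a, hA⟩, ⟨b, rfl⟩⟩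
    · obtain ⟨u₁, p₀, q₀, u₂, rfl, rfl, rfl⟩ := map_eq_append_cons_cons hA
      exact (ihu rfl).cons (by simp [sub])
    · exact ihw hB
    · refine .inr ⟨[], ⟨r, rfl⟩, nil_prefix, ⟨_, rfl, a, p, ?_, rfl⟩, ⟨_, rfl, q, b, hw, rfl⟩⟩
      simpa [hA] using PosSeq.starCons hu (.starNil (r := r))

theorem hasTransitionNode_of_mem_followSet {R : RE α} {p q : TreePath}
    (h : q ∈ R.followSet p) : R.HasTransitionNode p q :=
  let ⟨_, _, hseq⟩ := h
  hseq.hasTransitionNode rfl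

theorem PosSeq.exists_extend_of_sub_singleton {R r : RE α} {d : Dir} (hd : R.sub [d] = some r)
    {w : List TreePath} (h : PosSeq r w) :
    ∃ w₁ w₂, PosSeq R (w₁ ++ w.map (d :: ·) ++ w₂) := by
  rcases R with _ | _ | ⟨r₁, s₁⟩ | ⟨r₁, s₁⟩ | r₁ <;> cases d <;>
    simp only [sub, Option.some.injEq, reduceCtorEq] at hd <;> subst hd
  · obtain ⟨v, hv⟩ := exists_posSeq s₁
    exact ⟨[], _, by simpa using h.cat hv⟩
  · obtain ⟨u, hu⟩ := exists_posSeq r₁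
    exact ⟨_, [], by simpa using hu.cat h⟩
  · exact ⟨[], [], by simpa using h.altL⟩
  · exact ⟨[], [], by simpa using h.altR⟩
  · exact ⟨[], [], by simpa using h.starCons .starNil⟩

theorem PosSeq.exists_extend_of_sub {R r : RE α} {c : TreePath} (hc : R.sub c = some r)
    {w : List TreePath} (h : PosSeq r w) :
    ∃ w₁ w₂, PosSeq R (w₁ ++ w.map (c ++ ·) ++ w₂) := by
  induction c generalizing R with
  | nil =>
    obtain rfl : R = r := by simpa [sub] using hc
    exact ⟨[], [], by simpa using h⟩
  | cons d c ih =>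
    rw [← singleton_append, sub_append, Option.bind_eq_some_iff] at hc
    obtain ⟨r₀, hd, hc⟩ := hc
    obtain ⟨w₁, w₂, hseq⟩ := ih hc
    obtain ⟨v₁, v₂, hseq⟩ := hseq.exists_extend_of_sub_singleton hd
    exact ⟨v₁ ++ w₁.map (d :: ·), w₂.map (d :: ·) ++ v₂, by simpa [Function.comp_def] using hseq⟩

theorem mem_followSet_of_sub {R r : RE α} {c : TreePath} (hc : R.sub c = some r)
    {A B : List TreePath} {p q : TreePath} (h : PosSeq r (A ++ p :: q :: B)) :
    c ++ q ∈ R.followSet (c ++ p) := by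
  obtain ⟨w₁, w₂, hseq⟩ := h.exists_extend_of_sub hc
  exact ⟨w₁ ++ A.map (c ++ ·), B.map (c ++ ·) ++ w₂, by simpa using hseq⟩

theorem mem_followSet_of_isCatNode {R : RE α} {v p q : TreePath} (hv : R.IsCatNode v)
    (hp : p ∈ R.lastSet (v ++ [Dir.L])) (hq : q ∈ R.firstSet (v ++ [Dir.R])) :
    q ∈ R.followSet p := by
  obtain ⟨r, s, hrs⟩ := hv
  obtain ⟨r', hr, u, p₀, hu, rfl⟩ := hp
  obtain ⟨s', hs, q₀, w, hw, rfl⟩ := hq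
  simp only [sub_append_of_sub_eq hrs, sub, Option.some.injEq] at hr hs
  subst hr hs
  simpa using mem_followSet_of_sub hrs (by simpa using hu.cat hw)

theorem mem_followSet_of_isStarNode {R : RE α} {u p q : TreePath} (hu : R.IsStarNode u)
    (hp : p ∈ R.lastSet u) (hq : q ∈ R.firstSet u) : q ∈ R.followSet p := by
  obtain ⟨r, hr⟩ := hu
  obtain ⟨r', hr', w, p₀, hw, rfl⟩ := hp
  obtain ⟨s', hs', q₀, w', hw', rfl⟩ := hq
  rw [hr, Option.some.injEq] at hr' hs'
  subst hr' hs'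
  exact mem_followSet_of_sub hr (by simpa using hw.star_append hw')

theorem exists_mem_relNOdot_superset {R : RE α} {P : Set TreePath} {a : α} {v : TreePath}
    (hv : v ∈ R.NOdot P a) : ∃ u ∈ R.RelNOdot P a, R.deltaOdot v a ⊆ R.deltaOdot u a :=
  (Subrelation.wf (fun h => ⟨h.1, h.2.1⟩) wellFounded_strictPrefix).exists_undominated
    (fun v => R.deltaOdot v a) (fun _ _ h _ hq => ⟨hq.1, h.2.2 hq.2⟩) hv

theorem exists_mem_relNStar_superset {R : RE α} {P : Set TreePath} {a : α} {v : TreePath}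
    (hv : v ∈ R.NStar P a) : ∃ u ∈ R.RelNStar P a, R.firstSet v ⊆ R.firstSet u :=
  (Subrelation.wf (fun h => ⟨h.1, h.2.1⟩) wellFounded_strictPrefix).exists_undominated
    R.firstSet (fun _ _ h => h.2.2) hv

theorem exists_mem_nStar {R : RE α} {P : Set TreePath} {a : α} {p q s : TreePath}
    (hp : p ∈ P) (hqa : R.labelOf q = some a) (hs : R.IsStarNode s) (hslca : s <+: lcaP p q)
    (hps : p ∈ R.lastSet s) (hqs : q ∈ R.firstSet s) : ∃ u ∈ R.NStar P a, q ∈ R.firstSet u := by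
  obtain ⟨u, hlow⟩ := exists_isLowestStarAnc hslca hs
  have hsu : s <+: u := hlow.2.2 s hslca hs
  have hqu : q ∈ R.firstSet u := mem_firstSet_of_prefix hqs hsu (hlow.1.trans (lcaP_prefix_right p q))
  have hpu : p ∈ R.lastSet u := mem_lastSet_of_prefix hps hsu (hlow.1.trans (lcaP_prefix_left p q))
  exact ⟨u, ⟨hlow.2.1, ⟨p, hp, q, hqa, hlow⟩, ⟨p, hp, hpu⟩, ⟨q, hqa, hqu⟩⟩, hqu⟩

end RE

theorem deltaSet_eq_union_relevant_nodes_general {α : Type} (R : RE α) (P : Set TreePath)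
    (a : α) :
    R.deltaSet P a =
      (⋃ v ∈ R.RelNOdot P a, R.deltaOdot v a) ∪
        (⋃ u ∈ R.RelNStar P a, R.deltaStar u a) := by
  ext q
  simp only [RE.deltaSet, RE.delta, Set.mem_union, Set.mem_iUnion₂, exists_prop]
  constructor
  · rintro ⟨p, hp, hqa, hpq⟩
    rcases RE.hasTransitionNode_of_mem_followSet hpq with
      ⟨v, hv, hpv, hqv⟩ | ⟨s, hs, hslca, hps, hqs⟩
    · obtain ⟨u, hu, hvu⟩ := RE.exists_mem_relNOdot_superset
        (show v ∈ R.NOdot P a from ⟨hv, Set.mem_biUnion hp hpv, q, hqa, hqv⟩)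
      exact .inl ⟨u, hu, hvu ⟨hqa, hqv⟩⟩
    · obtain ⟨v, hv, hqv⟩ := RE.exists_mem_nStar hp hqa hs hslca hps hqs
      obtain ⟨u, hu, hvu⟩ := RE.exists_mem_relNStar_superset hv
      exact .inr ⟨u, hu, (RE.mem_deltaStar_of_isStarNode hu.1.1).mpr ⟨hqa, hvu hqv⟩⟩
  · rintro (⟨v, hv, hqa, hqv⟩ | ⟨u, hu, hq⟩)
    · obtain ⟨p, hp, hpv⟩ := Set.mem_iUnion₂.mp hv.1.2.1
      exact ⟨p, hp, hqa, RE.mem_followSet_of_isCatNode hv.1.1 hpv hqv⟩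
    · obtain ⟨hqa, hqu⟩ := (RE.mem_deltaStar_of_isStarNode hu.1.1).mp hq
      obtain ⟨p, hp, hpu⟩ := hu.1.2.2.1
      exact ⟨p, hp, hqa, RE.mem_followSet_of_isStarNode hu.1.1 hpu hqu⟩

/-- For any set of positions `P` of `R` and any character `α`, `δ(P,α)` is the union
over the relevant `⊙`-transition nodes `v ∈ Ñ⊙(P,α)` of `δ⊙(v,α)` together with the
union over the relevant `∗`-transition nodes `u ∈ Ñ∗(P,α)` of `δ∗(u,α)`. -/
theorem deltaSet_eq_union_relevant_nodes {α : Type} (R : RE α) (P : Set TreePath)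
    (a : α) (hP : ∀ p ∈ P, R.IsPos p) :
    R.deltaSet P a =
      (⋃ v ∈ R.RelNOdot P a, R.deltaOdot v a) ∪
        (⋃ u ∈ R.RelNStar P a, R.deltaStar u a) :=
  deltaSet_eq_union_relevant_nodes_general R P a
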